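/- arXiv:2203.04004 — 3 statements merged into one kernel-verified Lean document; each statement's English description precedes it below -/
import Mathlib

section
/- Let K_n, K, K̃ be nonempty compact subsets of a compact set in ℝ^N. If K_n → K in the Hausdorff distance and ∂K_n → K̃ in the Hausdorff distance, then ∂K ⊆ K̃ ⊆ K (where ∂K denotes the topological frontier of K). -/
open Metric Filter Set

/-- A preconnected set meeting both `t` and `tᶜ` meets `frontier t`. -/
lemma aux_conn_meets_frontier {α : Type*} [TopologicalSpace α] {S t : Set α}
    (hS : IsPreconnected S) {a z : α} (ha : a ∈ S) (hz : z ∈ S)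
    (hat : a ∈ t) (hzt : z ∉ t) : (S ∩ frontier t).Nonempty := by
  by_contra h
  rw [Set.not_nonempty_iff_eq_empty] at h
  have hdisj : ∀ x ∈ S, x ∉ frontier t := fun x hx hxf =>
    (Set.eq_empty_iff_forall_notMem.mp h x) ⟨hx, hxf⟩
  have hcover : S ⊆ interior t ∪ (closure t)ᶜ := by
    intro x hx
    by_cases hxc : x ∈ closure t
    · left
      by_contra hxi
      exact hdisj x hx ⟨hxc, hxi⟩
    · right; exact hxc
  have ha' : a ∈ S ∩ interior t := by
    refine ⟨ha, ?_⟩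
    by_contra hai
    exact hdisj a ha ⟨subset_closure hat, hai⟩
  have hz' : z ∈ S ∩ (closure t)ᶜ := by
    refine ⟨hz, ?_⟩
    intro hzc
    by_cases hzi : z ∈ interior t
    · exact hzt (interior_subset hzi)
    · exact hdisj z hz ⟨hzc, hzi⟩
  obtain ⟨w, _, hw1, hw2⟩ := hS (interior t) (closure t)ᶜ isOpen_interior
    isClosed_closure.isOpen_compl hcover ⟨a, ha'⟩ ⟨z, hz'⟩
  exact hw2 (subset_closure (interior_subset hw1))

/-- If `Kₙ → K` and `∂Kₙ → K̃` in the Hausdorff distance (all nonempty compact subsets of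
a fixed compact set in `ℝ^N`), then `∂K ⊆ K̃ ⊆ K`. -/
theorem frontier_subset_of_hausdorff_limits {N : ℕ}
    (Cset : Set (EuclideanSpace ℝ (Fin N))) (hCset : IsCompact Cset)
    (Kn : ℕ → Set (EuclideanSpace ℝ (Fin N)))
    (K Ktilde : Set (EuclideanSpace ℝ (Fin N)))
    (hKn : ∀ n, IsCompact (Kn n) ∧ (Kn n).Nonempty ∧ Kn n ⊆ Cset)
    (hK : IsCompact K) (hKne : K.Nonempty) (hKsub : K ⊆ Cset)
    (hKt : IsCompact Ktilde) (hKtne : Ktilde.Nonempty) (hKtsub : Ktilde ⊆ Cset)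
    (h1 : Tendsto (fun n => hausdorffDist (Kn n) K) atTop (nhds 0))
    (h2 : Tendsto (fun n => hausdorffDist (frontier (Kn n)) Ktilde) atTop (nhds 0)) :
    frontier K ⊆ Ktilde ∧ Ktilde ⊆ K := by
  rcases subsingleton_or_nontrivial (EuclideanSpace ℝ (Fin N)) with hsub | hnt
  · -- trivial case: the space is a single point
    have hKuniv : K = univ := by
      obtain ⟨k, hk⟩ := hKne
      exact eq_univ_of_forall fun x => (Subsingleton.elim x k) ▸ hk
    constructor
    · rw [hKuniv, frontier_univ]; exact empty_subset _
    · rw [hKuniv]; exact subset_univ _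
  · -- nontrivial case
    have hfne : ∀ n, (frontier (Kn n)).Nonempty := by
      intro n
      rw [nonempty_frontier_iff]
      refine ⟨(hKn n).2.1, fun huniv => ?_⟩
      exact IsCompact.ne_univ (huniv ▸ (hKn n).1) huniv
    have hbddC : Bornology.IsBounded Cset := hCset.isBounded
    have hbddKn : ∀ n, Bornology.IsBounded (Kn n) := fun n => hbddC.subset (hKn n).2.2
    have hbddF : ∀ n, Bornology.IsBounded (frontier (Kn n)) := fun n =>
      (hbddKn n).subset ((hKn n).1.isClosed.frontier_subset)
    have hfsub : ∀ n, frontier (Kn n) ⊆ Kn n := fun n => (hKn n).1.isClosed.frontier_subset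
    have hEdist1 : ∀ n, EMetric.hausdorffEdist (Kn n) K ≠ ⊤ := fun n =>
      hausdorffEdist_ne_top_of_nonempty_of_bounded (hKn n).2.1 hKne (hbddKn n) (hK.isBounded)
    have hEdist2 : ∀ n, EMetric.hausdorffEdist (frontier (Kn n)) Ktilde ≠ ⊤ := fun n =>
      hausdorffEdist_ne_top_of_nonempty_of_bounded (hfne n) hKtne (hbddF n) (hKt.isBounded)
    constructor
    · -- frontier K ⊆ Ktilde
      intro x hx
      rw [← hKt.isClosed.closure_eq]
      rw [mem_closure_iff_infDist_zero hKtne]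
      have hle : ∀ ε > (0:ℝ), infDist x Ktilde < ε := by
        intro ε hε
        -- x ∈ K and x ∈ closure Kᶜ
        have hxK : x ∈ K := hK.isClosed.closure_eq ▸ hx.1
        have hxc : x ∈ closure Kᶜ := by
          rw [frontier_eq_closure_inter_closure] at hx
          exact hx.2
        -- find z ∉ K close to x
        obtain ⟨z, hzK, hzd⟩ : ∃ z ∉ K, dist x z < ε / 4 := by
          rw [Metric.mem_closure_iff] at hxc
          obtain ⟨z, hz1, hz2⟩ := hxc (ε / 4) (by linarith)
          exact ⟨z, hz1, hz2⟩
        have hδ : 0 < infDist z K :=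
          (hK.isClosed.notMem_iff_infDist_pos hKne).mp hzK
        set δ := min (infDist z K) (ε / 4) with hδdef
        have hδpos : 0 < δ := lt_min hδ (by linarith)
        obtain ⟨n, hn1, hn2⟩ :=
          ((h1.eventually_lt_const hδpos).and (h2.eventually_lt_const (by linarith : (0:ℝ) < ε/4))).exists
        -- a ∈ Kn n close to x
        obtain ⟨a, haKn, had⟩ := exists_dist_lt_of_hausdorffDist_lt' hxK
          (lt_of_lt_of_le hn1 (min_le_right _ _)) (hEdist1 n)
        -- z ∉ Kn n
        have hzKn : z ∉ Kn n := by
          intro hzmem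
          have := infDist_le_hausdorffDist_of_mem hzmem (hEdist1 n)
          have h2' : hausdorffDist (Kn n) K < infDist z K :=
            lt_of_lt_of_le hn1 (min_le_left _ _)
          linarith
        -- segment from a to z crosses frontier (Kn n)
        obtain ⟨w, hwseg, hwf⟩ := aux_conn_meets_frontier
          (convex_segment a z).isPreconnected (left_mem_segment ℝ a z)
          (right_mem_segment ℝ a z) haKn hzKn
        -- w is close to x
        have hwd : dist w x ≤ max (dist a x) (dist z x) := by
          have : segment ℝ a z ⊆ Metric.closedBall x (max (dist a x) (dist z x)) :=
            (convex_closedBall x _).segment_subset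
              (by simp [Metric.mem_closedBall, le_max_left])
              (by simp [Metric.mem_closedBall, le_max_right])
          simpa [Metric.mem_closedBall] using this hwseg
        have hax : dist a x < ε / 4 := had
        have hzx : dist z x < ε / 4 := by rw [dist_comm]; exact hzd
        have hwx : dist w x < ε / 4 := lt_of_le_of_lt hwd (max_lt hax hzx)
        have h3 : infDist w Ktilde ≤ hausdorffDist (frontier (Kn n)) Ktilde :=
          infDist_le_hausdorffDist_of_mem hwf (hEdist2 n)
        have h4 : infDist x Ktilde ≤ infDist w Ktilde + dist x w :=
          infDist_le_infDist_add_dist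
        rw [dist_comm] at hwx
        linarith
      have h0 : infDist x Ktilde ≤ 0 := by
        by_contra hpos
        push_neg at hpos
        exact absurd (hle _ hpos) (lt_irrefl _)
      exact le_antisymm h0 infDist_nonneg
    · -- Ktilde ⊆ K
      intro y hy
      rw [← hK.isClosed.closure_eq, mem_closure_iff_infDist_zero hKne]
      have hle : ∀ ε > (0:ℝ), infDist y K < ε := by
        intro ε hε
        obtain ⟨n, hn1, hn2⟩ :=
          ((h1.eventually_lt_const (by linarith : (0:ℝ) < ε/2)).and
            (h2.eventually_lt_const (by linarith : (0:ℝ) < ε/2))).exists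
        obtain ⟨w, hwf, hwd⟩ := exists_dist_lt_of_hausdorffDist_lt' hy hn2 (hEdist2 n)
        have h3 : infDist w K ≤ hausdorffDist (Kn n) K :=
          infDist_le_hausdorffDist_of_mem (hfsub n hwf) (hEdist1 n)
        have h4 : infDist y K ≤ infDist w K + dist y w :=
          infDist_le_infDist_add_dist
        rw [dist_comm] at hwd
        linarith
      have h0 : infDist y K ≤ 0 := by
        by_contra hpos
        push_neg at hpos
        exact absurd (hle _ hpos) (lt_irrefl _)
      exact le_antisymm h0 infDist_nonneg
end

section
/- Let X be a reflexive Banach space and {A_n} a sequence of closed subspaces of X. Define A'' = {x ∈ X : x = strong-lim x_n with x_n ∈ A_n for all n}. Then A'' is a closed linear subspace of X. -/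
open Filter Topology

/-- Let `X` be a reflexive Banach space and `Aₙ` a sequence of closed subspaces. The set
`A'' = {x : x = strong-lim xₙ, xₙ ∈ Aₙ}` is a closed linear subspace of `X`. -/
theorem strongLimitSet_isClosed_submodule
    (X : Type*) [NormedAddCommGroup X] [NormedSpace ℝ X] [CompleteSpace X]
    (hrefl : Function.Surjective ⇑(NormedSpace.inclusionInDoubleDual ℝ X))
    (A : ℕ → Submodule ℝ X) (hA : ∀ n, IsClosed (A n : Set X)) :
    ∃ S : Submodule ℝ X,
      (S : Set X) =
        {x : X | ∃ u : ℕ → X, (∀ n, u n ∈ A n) ∧ Tendsto u atTop (𝓝 x)} ∧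
      IsClosed (S : Set X) := by
  set T : Set X := {x : X | ∃ u : ℕ → X, (∀ n, u n ∈ A n) ∧ Tendsto u atTop (𝓝 x)} with hT
  have hchar : ∀ x : X, x ∈ T ↔
      Tendsto (fun n => Metric.infDist x (A n : Set X)) atTop (𝓝 0) := by
    intro x
    constructor
    · rintro ⟨u, hu, hlim⟩
      have h0 : ∀ n, 0 ≤ Metric.infDist x (A n : Set X) := fun n => Metric.infDist_nonneg
      have hle : ∀ n, Metric.infDist x (A n : Set X) ≤ dist x (u n) := fun n =>
        Metric.infDist_le_dist_of_mem (hu n)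
      have hd : Tendsto (fun n => dist x (u n)) atTop (𝓝 0) := by
        have := tendsto_iff_dist_tendsto_zero.mp hlim
        simpa [dist_comm] using this
      exact squeeze_zero h0 hle hd
    · intro h
      have hne : ∀ n, ((A n : Set X)).Nonempty := fun n => ⟨0, (A n).zero_mem⟩
      have hex : ∀ n : ℕ, ∃ y ∈ (A n : Set X),
          dist x y < Metric.infDist x (A n : Set X) + 1 / (n + 1) := by
        intro n
        have hpos : (0 : ℝ) < 1 / (n + 1) := by positivity
        have : Metric.infDist x (A n : Set X) < Metric.infDist x (A n : Set X) + 1 / (n + 1) := by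
          linarith
        exact (Metric.infDist_lt_iff (hne n)).mp this
      choose u hu hdu using hex
      refine ⟨u, hu, ?_⟩
      rw [tendsto_iff_dist_tendsto_zero]
      have h0 : ∀ n, 0 ≤ dist (u n) x := fun n => dist_nonneg
      have hle : ∀ n, dist (u n) x ≤ Metric.infDist x (A n : Set X) + 1 / (n + 1) := by
        intro n; rw [dist_comm]; exact (hdu n).le
      have hlim2 : Tendsto (fun n : ℕ => Metric.infDist x (A n : Set X) + 1 / (n + 1))
          atTop (𝓝 0) := by
        have h2 : Tendsto (fun n : ℕ => 1 / ((n : ℝ) + 1)) atTop (𝓝 0) :=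
          tendsto_one_div_add_atTop_nhds_zero_nat
        simpa using h.add h2
      exact squeeze_zero h0 hle hlim2
  refine ⟨{ carrier := T
            zero_mem' := ⟨fun _ => 0, fun n => (A n).zero_mem, tendsto_const_nhds⟩
            add_mem' := ?_
            smul_mem' := ?_ }, rfl, ?_⟩
  · rintro a b ⟨u, hu, hul⟩ ⟨v, hv, hvl⟩
    exact ⟨u + v, fun n => (A n).add_mem (hu n) (hv n), hul.add hvl⟩
  · rintro c a ⟨u, hu, hul⟩
    exact ⟨c • u, fun n => (A n).smul_mem c (hu n), hul.const_smul c⟩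
  · show IsClosed T
    rw [← isSeqClosed_iff_isClosed]
    intro w x hw hwx
    rw [hchar]
    rw [Metric.tendsto_atTop]
    intro ε hε
    obtain ⟨k, hk⟩ := (Metric.tendsto_atTop.mp hwx) (ε / 2) (by linarith)
    have hwk := (hchar (w k)).mp (hw k)
    obtain ⟨N, hN⟩ := (Metric.tendsto_atTop.mp hwk) (ε / 2) (by linarith)
    refine ⟨N, fun n hn => ?_⟩
    have h1 : Metric.infDist x (A n : Set X) ≤
        Metric.infDist (w k) (A n : Set X) + dist x (w k) :=
      Metric.infDist_le_infDist_add_dist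
    have h2 := hN n hn
    have h3 := hk k le_rfl
    rw [Real.dist_eq, sub_zero, abs_of_nonneg Metric.infDist_nonneg] at h2 ⊢
    have h4 : dist x (w k) < ε / 2 := by rwa [dist_comm]
    linarith
end

section
/- Let Ω ⊂ ℝ^N be bounded open and r, L > 0. The class of compact Lipschitz hypersurfaces in Ω̄ with constants r and L is closed under convergence in the Hausdorff distance: if each K_n satisfies the bi-Lipschitz chart conditions (a),(b) with constants r, L and K_n → K in the Hausdorff distance (K compact nonempty), then K also satisfies conditions (a),(b) with constants r, L. -/
open Metric Filter Set Topology MeasureTheory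

noncomputable section

abbrev Euc (N : ℕ) := EuclideanSpace ℝ (Fin N)

/-- The hyperplane `π = {y : y_N = 0}` in `ℝ^N` (last coordinate zero). -/
def piHyp (N : ℕ) : Set (Euc N) := {y | ∀ h : N - 1 < N, y ⟨N - 1, h⟩ = 0}

/-- The half-hyperplane `π⁺ = {y : y_N = 0, y_{N-1} ≥ 0}` in `ℝ^N`. -/
def piPlus (N : ℕ) : Set (Euc N) :=
  {y | (∀ h : N - 1 < N, y ⟨N - 1, h⟩ = 0) ∧ ∀ h : N - 2 < N, 0 ≤ y ⟨N - 2, h⟩}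

/-- `Φ` is a bi-Lipschitz chart for `K` at `x` with constants `r, L`: conditions (a), (b)
of the definition of a compact Lipschitz hypersurface. -/
def IsChartAt {N : ℕ} (r L : ℝ) (K : Set (Euc N)) (x : Euc N) (Φ : Euc N → Euc N) : Prop :=
  (∀ z₁ ∈ ball x r, ∀ z₂ ∈ ball x r,
      L⁻¹ * ‖z₁ - z₂‖ ≤ ‖Φ z₁ - Φ z₂‖ ∧ ‖Φ z₁ - Φ z₂‖ ≤ L * ‖z₁ - z₂‖) ∧
  Φ x = 0 ∧ Φ '' (K ∩ ball x r) ⊆ piHyp N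

/-- `K` is a compact Lipschitz hypersurface in `Ω̄` with constants `r, L`. -/
def IsLipHyp {N : ℕ} (Ω : Set (Euc N)) (r L : ℝ) (K : Set (Euc N)) : Prop :=
  K.Nonempty ∧ IsCompact K ∧ K ⊆ closure Ω ∧ ∀ x ∈ K, ∃ Φ, IsChartAt r L K x Φ

/-- `x` belongs to the interior of the Lipschitz hypersurface `K`. -/
def IsInteriorPt {N : ℕ} (r L : ℝ) (K : Set (Euc N)) (x : Euc N) : Prop :=
  ∃ Φ, IsChartAt r L K x Φ ∧ ∃ δ > 0, ball (0 : Euc N) δ ∩ piHyp N ⊆ Φ '' (K ∩ ball x r)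

/-- The boundary `bdry(K)` of a Lipschitz hypersurface: non-interior points. -/
def bdry {N : ℕ} (r L : ℝ) (K : Set (Euc N)) : Set (Euc N) :=
  {x ∈ K | ¬ IsInteriorPt r L K x}

/-- The class `MR(r,L)`: Lipschitz hypersurfaces with half-hyperplane charts at boundary
points (condition (c)). -/
def MemMR {N : ℕ} (Ω : Set (Euc N)) (r L : ℝ) (K : Set (Euc N)) : Prop :=
  IsLipHyp Ω r L K ∧ ∀ x ∈ bdry r L K, ∃ Φ, IsChartAt r L K x Φ ∧
    Φ '' (K ∩ ball x r) = (Φ '' ball x r) ∩ piPlus N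

/-- The class `FR(r,L,M₀)`: Lipschitz hypersurfaces that are unions of at most `M₀`
hypersurfaces of class `MR(r,L)`. -/
def MemFR {N : ℕ} (Ω : Set (Euc N)) (r L : ℝ) (M₀ : ℕ) (K : Set (Euc N)) : Prop :=
  IsLipHyp Ω r L K ∧ ∃ J, 1 ≤ J ∧ J ≤ M₀ ∧ ∃ H : Fin J → Set (Euc N),
    (∀ j, MemMR Ω r L (H j)) ∧ K = ⋃ j, H j

/-- `K ∈ FR(r,L,M₀)` together with a choice of decomposition whose singular set is `S`. -/
def MemFRwithSing {N : ℕ} (Ω : Set (Euc N)) (r L : ℝ) (M₀ : ℕ)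
    (K S : Set (Euc N)) : Prop :=
  IsLipHyp Ω r L K ∧ ∃ J, 1 ≤ J ∧ J ≤ M₀ ∧ ∃ H : Fin J → Set (Euc N),
    (∀ j, MemMR Ω r L (H j)) ∧ K = ⋃ j, H j ∧ S = ⋃ j, bdry r L (H j)

/-- A modulus of continuity: positive, non-decreasing, left-continuous, tending to `0`. -/
def IsModulus (ω : ℝ → ℝ) : Prop :=
  (∀ t, 0 < t → 0 < ω t) ∧ (∀ s t, 0 < s → s ≤ t → ω s ≤ ω t) ∧
  (∀ t, 0 < t → Tendsto ω (nhdsWithin t (Iio t)) (𝓝 (ω t))) ∧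
  Tendsto ω (nhdsWithin 0 (Ioi 0)) (𝓝 0)

/-- The `ω`-separation condition of the class `FR(r,L,M₀,ω)`: if `x ∈ Kⁱ` has distance
`δ > 0` from `sing(Kⁱ)`, then its distance from the other components is at least `ω(δ)`. -/
def SepCond {N : ℕ} (ω : ℝ → ℝ) (M : ℕ) (Ki Si : Fin M → Set (Euc N)) : Prop :=
  ∀ i, ∀ x ∈ Ki i, ∀ δ : ℝ, 0 < δ → infDist x (Si i) = δ →
    ω δ ≤ infDist x (⋃ j ∈ {j | j ≠ i}, Ki j)



lemma coord_le_norm {N : ℕ} (v : EuclideanSpace ℝ (Fin N)) (i : Fin N) : |v i| ≤ ‖v‖ := by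
  rw [EuclideanSpace.norm_eq]
  have : |v i| = Real.sqrt (‖v i‖ ^ 2) := by
    rw [Real.sqrt_sq_eq_abs]; simp [Real.norm_eq_abs, abs_abs]
  rw [this]
  apply Real.sqrt_le_sqrt
  exact Finset.single_le_sum (f := fun j => ‖v j‖ ^ 2) (fun j _ => sq_nonneg _) (Finset.mem_univ i)

/-- The class of compact Lipschitz hypersurfaces with constants `r, L` is closed under
convergence in the Hausdorff distance. -/
theorem lipHyp_closed_under_hausdorff {N : ℕ} (hN : 2 ≤ N)
    (Ω : Set (Euc N)) (hΩo : IsOpen Ω) (hΩb : Bornology.IsBounded Ω)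
    (r L : ℝ) (hr : 0 < r) (hL : 0 < L)
    (Kn : ℕ → Set (Euc N)) (hKn : ∀ n, IsLipHyp Ω r L (Kn n))
    (K : Set (Euc N)) (hKc : IsCompact K) (hKne : K.Nonempty)
    (hconv : Tendsto (fun n => hausdorffDist (Kn n) K) atTop (𝓝 0)) :
    IsLipHyp Ω r L K := by
  have hKnne : ∀ n, (Kn n).Nonempty := fun n => (hKn n).1
  have hKncomp : ∀ n, IsCompact (Kn n) := fun n => (hKn n).2.1
  have hKnΩ : ∀ n, Kn n ⊆ closure Ω := fun n => (hKn n).2.2.1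
  have hΩbc : Bornology.IsBounded (closure Ω) := hΩb.closure
  have hEd : ∀ n, EMetric.hausdorffEdist (Kn n) K ≠ ⊤ := fun n =>
    hausdorffEdist_ne_top_of_nonempty_of_bounded (hKnne n) hKne
      (hΩbc.subset (hKnΩ n)) hKc.isBounded
  -- nearest points converging to any x ∈ K
  have hpt : ∀ x ∈ K, ∃ p : ℕ → Euc N, (∀ n, p n ∈ Kn n) ∧ Tendsto p atTop (𝓝 x) := by
    intro x hx
    have h1 : ∀ n, ∃ y ∈ Kn n, infDist x (Kn n) = dist x y := fun n =>
      (hKncomp n).exists_infDist_eq_dist (hKnne n) x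
    choose p hp hd using h1
    refine ⟨p, hp, ?_⟩
    rw [tendsto_iff_dist_tendsto_zero]
    have hb : ∀ n, dist (p n) x ≤ hausdorffDist (Kn n) K := by
      intro n
      rw [dist_comm, ← hd n]
      calc infDist x (Kn n) ≤ hausdorffDist K (Kn n) :=
            infDist_le_hausdorffDist_of_mem hx
              (by rw [EMetric.hausdorffEdist_comm]; exact hEd n)
        _ = hausdorffDist (Kn n) K := hausdorffDist_comm ..
    exact squeeze_zero (fun n => dist_nonneg) hb hconv
  refine ⟨hKne, hKc, ?_, ?_⟩
  · intro x hx
    obtain ⟨p, hp, hpx⟩ := hpt x hx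
    exact isClosed_closure.mem_of_tendsto hpx
      (Eventually.of_forall fun n => hKnΩ n (hp n))
  · intro x hx
    obtain ⟨p, hp, hpx⟩ := hpt x hx
    choose Φn hΦn using fun n => (hKn n).2.2.2 (p n) (hp n)
    set Ψ : ℕ → Euc N → Euc N := fun n z => Φn n (z - x + p n) with hΨdef
    have hmem : ∀ n, ∀ z ∈ ball x r, z - x + p n ∈ ball (p n) r := by
      intro n z hz
      rw [mem_ball, dist_eq_norm, add_sub_cancel_right, ← dist_eq_norm]
      exact hz
    have hbl : ∀ n, ∀ z₁ ∈ ball x r, ∀ z₂ ∈ ball x r,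
        L⁻¹ * ‖z₁ - z₂‖ ≤ ‖Ψ n z₁ - Ψ n z₂‖ ∧ ‖Ψ n z₁ - Ψ n z₂‖ ≤ L * ‖z₁ - z₂‖ := by
      intro n z₁ h₁ z₂ h₂
      have h := (hΦn n).1 _ (hmem n z₁ h₁) _ (hmem n z₂ h₂)
      have he : z₁ - x + p n - (z₂ - x + p n) = z₁ - z₂ := by abel
      rw [he] at h
      exact h
    have hΨx : ∀ n, Ψ n x = 0 := by
      intro n
      simp only [hΨdef, sub_self, zero_add]
      exact (hΦn n).2.1
    have hbd : ∀ n, ∀ z ∈ ball x r, Ψ n z ∈ closedBall (0 : Euc N) (L * r) := by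
      intro n z hz
      have h1 := (hbl n z hz x (mem_ball_self hr)).2
      rw [mem_closedBall, dist_zero_right]
      have : ‖Ψ n z‖ = ‖Ψ n z - Ψ n x‖ := by rw [hΨx n, sub_zero]
      rw [this]
      refine h1.trans ?_
      have hzx : ‖z - x‖ ≤ r := by
        rw [← dist_eq_norm]; exact (mem_ball.mp hz).le
      exact mul_le_mul_of_nonneg_left hzx hL.le
    obtain ⟨U, hU⟩ := (atTop : Filter ℕ).exists_ultrafilter_le
    have hlim : ∀ z, z ∈ ball x r → ∃ w, Tendsto (fun n => Ψ n z) U (𝓝 w) := by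
      intro z hz
      obtain ⟨w, -, hw⟩ := (isCompact_closedBall (0 : Euc N) (L * r)).ultrafilter_le_nhds
        (U.map fun n => Ψ n z)
        (by
          rw [Ultrafilter.coe_map, le_principal_iff, mem_map]
          exact univ_mem' fun n => hbd n z hz)
      exact ⟨w, hw⟩
    choose! w hw using hlim
    refine ⟨w, ?_, ?_, ?_⟩
    · intro z₁ h₁ z₂ h₂
      have ht : Tendsto (fun n => ‖Ψ n z₁ - Ψ n z₂‖) U (𝓝 ‖w z₁ - w z₂‖) :=
        ((hw z₁ h₁).sub (hw z₂ h₂)).norm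
      exact ⟨ge_of_tendsto' ht fun n => (hbl n z₁ h₁ z₂ h₂).1,
        le_of_tendsto' ht fun n => (hbl n z₁ h₁ z₂ h₂).2⟩
    · have h0 : Tendsto (fun n => Ψ n x) U (𝓝 (0 : Euc N)) := by
        simp only [hΨx]; exact tendsto_const_nhds
      exact tendsto_nhds_unique (hw x (mem_ball_self hr)) h0
    · rintro _ ⟨y, ⟨hyK, hyb⟩, rfl⟩
      intro hlt
      set i : Fin N := ⟨N - 1, hlt⟩
      obtain ⟨q, hq, hqy⟩ := hpt y hyK
      set v : ℕ → Euc N := fun n => q n - p n + x with hvdef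
      have hvy : Tendsto v atTop (𝓝 y) := by
        have h1 : Tendsto (fun n => q n - p n + x) atTop (𝓝 (y - x + x)) :=
          (hqy.sub hpx).add (tendsto_const_nhds : Tendsto (fun _ : ℕ => x) atTop (𝓝 x))
        rw [sub_add_cancel] at h1
        exact h1
      have hdist : Tendsto (fun n => dist (q n) (p n)) atTop (𝓝 (dist y x)) :=
        hqy.dist hpx
      have hev : ∀ᶠ n in atTop, dist (q n) (p n) < r :=
        hdist.eventually_lt_const (mem_ball.mp hyb)
      -- eventual bound on last coordinate
      have hbound : ∀ᶠ n in atTop, ‖Ψ n y i‖ ≤ L * ‖y - v n‖ := by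
        filter_upwards [hev] with n hn
        have hqball : q n ∈ ball (p n) r := mem_ball.mpr hn
        have hvball : v n ∈ ball x r := by
          rw [mem_ball, dist_eq_norm, hvdef]
          simpa [add_sub_cancel_right, ← dist_eq_norm] using hn
        have hΨv : Ψ n (v n) = Φn n (q n) := by
          have harg : q n - p n + x - x + p n = q n := by
            rw [add_sub_cancel_right, sub_add_cancel]
          simp only [hΨdef, hvdef]
          rw [harg]
        have hpi : Φn n (q n) ∈ piHyp N :=
          (hΦn n).2.2 ⟨q n, ⟨hq n, hqball⟩, rfl⟩
        have hzero : Ψ n (v n) i = 0 := by rw [hΨv]; exact hpi hlt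
        have : Ψ n y i = (Ψ n y - Ψ n (v n)) i := by
          simp [hzero]
        rw [this]
        calc ‖(Ψ n y - Ψ n (v n)) i‖ ≤ ‖Ψ n y - Ψ n (v n)‖ := by
              rw [Real.norm_eq_abs]; exact coord_le_norm _ i
          _ ≤ L * ‖y - v n‖ := (hbl n y hyb (v n) hvball).2
      have hto0 : Tendsto (fun n => L * ‖y - v n‖) atTop (𝓝 0) := by
        have h2 : Tendsto (fun n => ‖y - v n‖) atTop (𝓝 ‖y - y‖) :=
          ((tendsto_const_nhds : Tendsto (fun _ : ℕ => y) atTop (𝓝 y)).sub hvy).norm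
        rw [sub_self, norm_zero] at h2
        simpa using h2.const_mul L
      have hcoord0 : Tendsto (fun n => Ψ n y i) U (𝓝 0) :=
        squeeze_zero_norm' (hbound.filter_mono hU) (hto0.mono_left hU)
      have hcoordw : Tendsto (fun n => Ψ n y i) U (𝓝 (w y i)) :=
        ((EuclideanSpace.proj i).continuous.tendsto _).comp (hw y hyb)
      exact tendsto_nhds_unique hcoordw hcoord0


end
end
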